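/- Bidirectional decomposition lemma: Let P and Q be strings and suppose wed(P_{s:t}, Q) < τ for some substring P_{s:t}. If Q' is a τ-subsequence of Q (i.e., Σ_{q∈Q'} c(q) ≥ τ), then there exist a position j with s ≤ j ≤ t and a position i_q of some element of Q' in Q such that P_j ∈ B(Q_{i_q}) and wed(P_{s:t}, Q) = wed(P_{s:j-1}, Q_{1:i_q-1}) + sub(P_j, Q_{i_q}) + wed(P_{j+1:t}, Q_{i_q+1:|Q|}). -/

import Mathlib

/-- Weighted edit distance over strings on alphabet `α`, with `none` playing the
role of the empty symbol `ε`; `sub a b` is the cost of substituting `a` by `b`,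
`sub none (some b)` the insertion cost and `sub (some a) none` the deletion cost. -/
noncomputable def wed {α : Type*} (sub : Option α → Option α → ℝ) : List α → List α → ℝ
  | [], Q => (Q.map (fun q => sub none (some q))).sum
  | p :: P, [] => sub (some p) none + wed sub P []
  | p :: P, q :: Q =>
      min (min (wed sub P Q + sub (some p) (some q))
               (wed sub P (q :: Q) + sub (some p) none))
          (wed sub (p :: P) Q + sub none (some q))
termination_by P Q => P.length + Q.length
decreasing_by all_goals (simp [List.length]; try omega)

open scoped Classical in
/-- Substitution neighborhood `B(q) = {b ∈ Σ : sub(q,b) ≤ η}`. -/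
noncomputable def subNbhd {α : Type*} [Fintype α] (sub : Option α → Option α → ℝ)
    (η : ℝ) (q : α) : Finset α :=
  Finset.univ.filter (fun b => sub (some q) (some b) ≤ η)

open scoped Classical in
/-- The cost `c(q) = min_{q' ∈ Σ_ε \ B(q)} sub(q,q')`.  The minimum is over a
nonempty finite set since `ε` (i.e. `none`) is never in `B(q)`. -/
noncomputable def subCost {α : Type*} [Fintype α] (sub : Option α → Option α → ℝ)
    (η : ℝ) (q : α) : ℝ :=
  Finset.inf'
    (Finset.univ.filter (fun x : Option α => x ∉ (subNbhd sub η q).image some))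
    ⟨none, by simp⟩ (fun x => sub (some q) x)


/-!
Follow an optimal alignment of `R` with `Q`. An element `q` of `Q'` that is deleted costs
`sub(q, ε) ≥ c(q)`, and one substituted by some `r ∉ B(q)` costs `sub(q, r) ≥ c(q)`. So if no
element of `Q'` were aligned with a symbol of its neighbourhood, the alignment would cost at least
`∑_{q ∈ Q'} c(q) ≥ τ > wed(R, Q)`. Hence some `q ∈ Q'` is matched with `r ∈ B(q)`, and cutting
the optimal alignment at that pair splits `wed(R, Q)` as claimed. Formally this is an induction
along the recurrence for `wed`, carrying the dichotomy "`∑ c ≤ wed` or such a pair exists".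
-/

section EditDistance

variable {α : Type*} (sub : Option α → Option α → ℝ)

lemma wed_nil (Q : List α) : wed sub [] Q = (Q.map (fun q => sub none (some q))).sum := by
  rw [wed]

lemma wed_nil_cons (q : α) (Q : List α) :
    wed sub [] (q :: Q) = sub none (some q) + wed sub [] Q := by
  simp [wed_nil]

lemma wed_cons_nil (p : α) (P : List α) :
    wed sub (p :: P) [] = sub (some p) none + wed sub P [] := by
  rw [wed]

lemma wed_cons_cons (p q : α) (P Q : List α) :
    wed sub (p :: P) (q :: Q) =
      min (min (wed sub P Q + sub (some p) (some q))
               (wed sub P (q :: Q) + sub (some p) none))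
          (wed sub (p :: P) Q + sub none (some q)) := by
  rw [wed]

lemma wed_cons_cons_cases (p q : α) (P Q : List α) :
    wed sub (p :: P) (q :: Q) = sub (some p) (some q) + wed sub P Q ∨
      wed sub (p :: P) (q :: Q) = sub (some p) none + wed sub P (q :: Q) ∨
      wed sub (p :: P) (q :: Q) = sub none (some q) + wed sub (p :: P) Q := by
  rw [wed_cons_cons]
  rcases min_choice (min (wed sub P Q + sub (some p) (some q))
      (wed sub P (q :: Q) + sub (some p) none)) (wed sub (p :: P) Q + sub none (some q))
    with h | h <;> rw [h]
  · rcases min_choice (wed sub P Q + sub (some p) (some q))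
      (wed sub P (q :: Q) + sub (some p) none) with h' | h' <;> rw [h'] <;> simp [add_comm]
  · simp [add_comm]

lemma wed_cons_cons_le (p q : α) (P Q : List α) :
    wed sub (p :: P) (q :: Q) ≤ sub (some p) (some q) + wed sub P Q := by
  rw [wed_cons_cons]
  exact (min_le_left _ _).trans ((min_le_left _ _).trans (add_comm _ _).le)

lemma wed_cons_le (p : α) (P : List α) : ∀ Q : List α,
    wed sub (p :: P) Q ≤ sub (some p) none + wed sub P Q
  | [] => (wed_cons_nil sub p P).le
  | q :: Q => by
    rw [wed_cons_cons]
    exact (min_le_left _ _).trans ((min_le_right _ _).trans (add_comm _ _).le)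

lemma wed_le_cons (q : α) (Q : List α) : ∀ P : List α,
    wed sub P (q :: Q) ≤ sub none (some q) + wed sub P Q
  | [] => (wed_nil_cons sub q Q).le
  | p :: P => by
    rw [wed_cons_cons]
    exact (min_le_right _ _).trans (add_comm _ _).le

lemma wed_nonneg (hnn : ∀ a b : Option α, 0 ≤ sub a b) : ∀ P Q : List α, 0 ≤ wed sub P Q
  | [], Q => by
    rw [wed_nil]
    exact List.sum_nonneg (by simp [hnn])
  | p :: P, [] => by
    rw [wed_cons_nil]
    exact add_nonneg (hnn _ _) (wed_nonneg hnn P [])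
  | p :: P, q :: Q => by
    rcases wed_cons_cons_cases sub p q P Q with h | h | h <;> rw [h]
    · exact add_nonneg (hnn _ _) (wed_nonneg hnn P Q)
    · exact add_nonneg (hnn _ _) (wed_nonneg hnn P (q :: Q))
    · exact add_nonneg (hnn _ _) (wed_nonneg hnn (p :: P) Q)
termination_by P Q => P.length + Q.length

lemma wed_append_le : ∀ A C B D : List α,
    wed sub (A ++ B) (C ++ D) ≤ wed sub A C + wed sub B D
  | [], [], B, D => by simp [wed_nil]
  | [], c :: C, B, D => by
    have := wed_append_le [] C B D
    simp only [List.nil_append, List.cons_append] at this ⊢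
    linarith [wed_le_cons sub c (C ++ D) B, wed_nil_cons sub c C]
  | p :: A, [], B, D => by
    have := wed_append_le A [] B D
    simp only [List.nil_append, List.cons_append] at this ⊢
    linarith [wed_cons_le sub p (A ++ B) D, wed_cons_nil sub p A]
  | p :: A, c :: C, B, D => by
    have ih_sub := wed_append_le A C B D
    have ih_del := wed_append_le A (c :: C) B D
    have ih_ins := wed_append_le (p :: A) C B D
    simp only [List.cons_append] at ih_del ih_ins ⊢
    rcases wed_cons_cons_cases sub p c A C with h | h | h <;> rw [h]
    · linarith [wed_cons_cons_le sub p c (A ++ B) (C ++ D)]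
    · linarith [wed_cons_le sub p (A ++ B) (c :: (C ++ D))]
    · linarith [wed_le_cons sub c (C ++ D) (p :: (A ++ B))]
termination_by A C => A.length + C.length

lemma wed_append_cons_le (R₁ R₂ Q₁ Q₂ : List α) (r q : α) :
    wed sub (R₁ ++ r :: R₂) (Q₁ ++ q :: Q₂) ≤
      wed sub R₁ Q₁ + sub (some r) (some q) + wed sub R₂ Q₂ := by
  linarith [wed_append_le sub R₁ Q₁ (r :: R₂) (q :: Q₂), wed_cons_cons_le sub r q R₂ Q₂]

end EditDistance

section SubstitutionCost

variable {α : Type*} [Fintype α] (sub : Option α → Option α → ℝ) (η : ℝ)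

lemma subCost_le_sub_none (q : α) : subCost sub η q ≤ sub (some q) none :=
  Finset.inf'_le _ (by simp)

lemma subCost_le_of_not_mem_subNbhd {q b : α} (hb : b ∉ subNbhd sub η q) :
    subCost sub η q ≤ sub (some q) (some b) := by
  classical
  refine Finset.inf'_le _ ?_
  simpa using hb

lemma sum_subCost_le_wed_nil (hnn : ∀ a b : Option α, 0 ≤ sub a b)
    (hsym : ∀ a b : Option α, sub a b = sub b a) {Q' Q : List α} (hQ' : Q'.Sublist Q) :
    (Q'.map (subCost sub η)).sum ≤ wed sub [] Q := by
  rw [wed_nil]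
  calc (Q'.map (subCost sub η)).sum ≤ (Q'.map (fun q => sub none (some q))).sum :=
        List.sum_le_sum fun q _ => hsym (some q) none ▸ subCost_le_sub_none sub η q
    _ ≤ (Q.map (fun q => sub none (some q))).sum :=
        (hQ'.map _).sum_le_sum (by simp [hnn])

end SubstitutionCost

section Decomposition

variable {α : Type*} [Fintype α] (sub : Option α → Option α → ℝ) (η : ℝ)

/-- The conclusion of the decomposition lemma, with the positions `j` and `i` encoded by
splitting `R` and `Q` around them. -/
def AnchoredSplit (Q' R Q : List α) : Prop :=
  ∃ (R₁ : List α) (r : α) (R₂ Q₁ : List α) (q : α) (Q₂ : List α),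
    R = R₁ ++ r :: R₂ ∧ Q = Q₁ ++ q :: Q₂ ∧ q ∈ Q' ∧ r ∈ subNbhd sub η q ∧
      wed sub R Q = wed sub R₁ Q₁ + sub (some r) (some q) + wed sub R₂ Q₂

variable {sub η}

lemma AnchoredSplit.append {Q' A B C D : List α} (hsplit : AnchoredSplit sub η Q' B D)
    (hle : wed sub A C + wed sub B D ≤ wed sub (A ++ B) (C ++ D)) :
    AnchoredSplit sub η Q' (A ++ B) (C ++ D) := by
  obtain ⟨B₁, b, B₂, D₁, d, D₂, rfl, rfl, hd, hb, hBD⟩ := hsplit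
  refine ⟨A ++ B₁, b, B₂, C ++ D₁, d, D₂, by simp, by simp, hd, hb, le_antisymm ?_ ?_⟩
  · simpa using wed_append_cons_le sub (A ++ B₁) B₂ (C ++ D₁) D₂ b d
  · linarith [wed_append_le sub A C B₁ D₁]

lemma AnchoredSplit.mono {Q' Q'' R Q : List α} (hsplit : AnchoredSplit sub η Q'' R Q)
    (hQ'' : ∀ x ∈ Q'', x ∈ Q') : AnchoredSplit sub η Q' R Q := by
  obtain ⟨R₁, r, R₂, Q₁, q, Q₂, hR, hQ, hq, hrest⟩ := hsplit
  exact ⟨R₁, r, R₂, Q₁, q, Q₂, hR, hQ, hQ'' q hq, hrest⟩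

/-- One edit step `A ↦ C` of cost `cost` opening an optimal alignment of `A ++ B` with `C ++ D`
transports the dichotomy from `(Q'', B, D)` to `(Q', A ++ B, C ++ D)`, provided the elements of
`Q'` dropped from `Q''` are paid for by `cost`. -/
lemma sum_subCost_le_wed_or_anchoredSplit_append {Q' Q'' A B C D : List α} {cost : ℝ}
    (hw : wed sub (A ++ B) (C ++ D) = cost + wed sub B D) (hAC : wed sub A C ≤ cost)
    (hsum : (Q'.map (subCost sub η)).sum ≤ (Q''.map (subCost sub η)).sum + cost)
    (hQ'' : ∀ x ∈ Q'', x ∈ Q')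
    (ih : (Q''.map (subCost sub η)).sum ≤ wed sub B D ∨ AnchoredSplit sub η Q'' B D) :
    (Q'.map (subCost sub η)).sum ≤ wed sub (A ++ B) (C ++ D) ∨
      AnchoredSplit sub η Q' (A ++ B) (C ++ D) := by
  rcases ih with hle | hsplit
  · left; linarith
  · right; exact (hsplit.mono hQ'').append (by linarith)

variable (sub η)

theorem sum_subCost_le_wed_or_anchoredSplit (hnn : ∀ a b : Option α, 0 ≤ sub a b)
    (hsym : ∀ a b : Option α, sub a b = sub b a) :
    ∀ (R Q Q' : List α), Q'.Sublist Q →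
      (Q'.map (subCost sub η)).sum ≤ wed sub R Q ∨ AnchoredSplit sub η Q' R Q
  | [], Q, Q', hQ' => .inl (sum_subCost_le_wed_nil sub η hnn hsym hQ')
  | p :: P, [], Q', hQ' => .inl (by simpa [List.sublist_nil.mp hQ'] using wed_nonneg sub hnn _ _)
  | p :: P, q :: Q, Q', hQ' => by
    have hsub : wed sub [p] [q] ≤ sub (some p) (some q) := by
      simpa [wed_nil] using wed_cons_cons_le sub p q [] []
    have hdel : wed sub [p] [] ≤ sub (some p) none := by simp [wed_cons_nil, wed_nil]
    have hins : wed sub [] [q] ≤ sub none (some q) := by simp [wed_nil]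
    rcases wed_cons_cons_cases sub p q P Q with hw | hw | hw
    · cases hQ' with
      | cons _ hQ' =>
        exact sum_subCost_le_wed_or_anchoredSplit_append (A := [p]) (C := [q]) hw hsub
          (by simp [hnn]) (fun _ => id) (sum_subCost_le_wed_or_anchoredSplit hnn hsym P Q Q' hQ')
      | @cons_cons Q₁ _ _ hQ' =>
        by_cases hpq : p ∈ subNbhd sub η q
        · exact .inr ⟨[], p, P, [], q, Q, rfl, rfl, List.mem_cons_self, hpq, by simp [hw, wed_nil]⟩
        refine sum_subCost_le_wed_or_anchoredSplit_append (A := [p]) (C := [q]) hw hsub ?_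
          (fun _ => List.mem_cons_of_mem q) (sum_subCost_le_wed_or_anchoredSplit hnn hsym P Q Q₁ hQ')
        rw [List.map_cons, List.sum_cons, hsym (some p)]
        linarith [subCost_le_of_not_mem_subNbhd sub η hpq]
    · exact sum_subCost_le_wed_or_anchoredSplit_append (A := [p]) (C := []) hw hdel
        (by simp [hnn]) (fun _ => id) (sum_subCost_le_wed_or_anchoredSplit hnn hsym P (q :: Q) Q' hQ')
    · cases hQ' with
      | cons _ hQ' =>
        exact sum_subCost_le_wed_or_anchoredSplit_append (A := []) (C := [q]) hw hins
          (by simp [hnn]) (fun _ => id) (sum_subCost_le_wed_or_anchoredSplit hnn hsym (p :: P) Q Q' hQ')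
      | @cons_cons Q₁ _ _ hQ' =>
        refine sum_subCost_le_wed_or_anchoredSplit_append (A := []) (C := [q]) hw hins ?_
          (fun _ => List.mem_cons_of_mem q) (sum_subCost_le_wed_or_anchoredSplit hnn hsym (p :: P) Q Q₁ hQ')
        rw [List.map_cons, List.sum_cons, hsym none]
        linarith [subCost_le_sub_none sub η q]
termination_by R Q => R.length + Q.length

end Decomposition

theorem bidirectional_decomposition_general {α : Type*} [Fintype α]
    (sub : Option α → Option α → ℝ)
    (hnn : ∀ a b : Option α, 0 ≤ sub a b)
    (hsym : ∀ a b : Option α, sub a b = sub b a)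
    (η : ℝ) (τ : ℝ)
    (R Q Q' : List α) (hQ' : Q'.Sublist Q)
    (hcost : τ ≤ (Q'.map (subCost sub η)).sum)
    (hmatch : wed sub R Q < τ) :
    ∃ j : Fin R.length, ∃ i : Fin Q.length,
      Q.get i ∈ Q' ∧
      R.get j ∈ subNbhd sub η (Q.get i) ∧
      wed sub R Q =
        wed sub (R.take j) (Q.take i)
          + sub (some (R.get j)) (some (Q.get i))
          + wed sub (R.drop (j + 1)) (Q.drop (i + 1)) := by
  obtain ⟨R₁, r, R₂, Q₁, q, Q₂, rfl, rfl, hq, hr, hsplit⟩ :=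
    (sum_subCost_le_wed_or_anchoredSplit sub η hnn hsym R Q Q' hQ').resolve_left (by linarith)
  refine ⟨⟨R₁.length, by simp⟩, ⟨Q₁.length, by simp⟩, ?_⟩
  simpa using ⟨hq, hr, hsplit⟩

/-- bidirectional decomposition lemma: if a substring `R = P_{s:t}`
satisfies `wed(R,Q) < τ` and `Q'` is a `τ`-subsequence of `Q`
(`∑_{q∈Q'} c(q) ≥ τ`), then there are positions `j` in `R` and `i` in `Q` with
`Q_i` an element of `Q'`, such that `R_j ∈ B(Q_i)` and the distance decomposes as
`wed(R,Q) = wed(R_{<j}, Q_{<i}) + sub(R_j, Q_i) + wed(R_{>j}, Q_{>i})`. -/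
theorem bidirectional_decomposition {α : Type*} [Fintype α]
    (sub : Option α → Option α → ℝ)
    (hnn : ∀ a b : Option α, 0 ≤ sub a b)
    (hsym : ∀ a b : Option α, sub a b = sub b a)
    (hzero : ∀ a : Option α, sub a a = 0)
    (η : ℝ) (hη : 0 ≤ η) (τ : ℝ) (hτ : 0 < τ)
    (R Q Q' : List α) (hQ' : Q'.Sublist Q)
    (hcost : τ ≤ (Q'.map (subCost sub η)).sum)
    (hmatch : wed sub R Q < τ) :
    ∃ j : Fin R.length, ∃ i : Fin Q.length,
      Q.get i ∈ Q' ∧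
      R.get j ∈ subNbhd sub η (Q.get i) ∧
      wed sub R Q =
        wed sub (R.take j) (Q.take i)
          + sub (some (R.get j)) (some (Q.get i))
          + wed sub (R.drop (j + 1)) (Q.drop (i + 1)) :=
  bidirectional_decomposition_general sub hnn hsym η τ R Q Q' hQ' hcost hmatch
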